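/- arXiv:0711.2115 — 8 statements merged into one kernel-verified Lean document; each statement's English description precedes it below -/
import Mathlib

section
/- A finite lattice is lower locally distributive (i.e., lower semi-modular and containing no sublattice isomorphic to M_3) if and only if every element has a unique minimal (irredundant) decomposition as a supremum of join-irreducible elements. -/
/-- Lower semi-modularity: if `x ⊔ y` covers both `x` and `y`, then both `x` and `y`
cover `x ⊓ y`. -/
def LowerSemimodular (L : Type*) [Lattice L] : Prop :=
  ∀ x y : L, x ⋖ x ⊔ y → y ⋖ x ⊔ y → (x ⊓ y ⋖ x ∧ x ⊓ y ⋖ y)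

/-- `L` contains a sublattice isomorphic to the diamond `M₃`. -/
def HasM3 (L : Type*) [Lattice L] : Prop :=
  ∃ b m₁ m₂ m₃ t : L,
    b ≠ m₁ ∧ b ≠ m₂ ∧ b ≠ m₃ ∧ b ≠ t ∧ m₁ ≠ m₂ ∧ m₁ ≠ m₃ ∧ m₂ ≠ m₃ ∧
    m₁ ≠ t ∧ m₂ ≠ t ∧ m₃ ≠ t ∧
    m₁ ⊓ m₂ = b ∧ m₁ ⊓ m₃ = b ∧ m₂ ⊓ m₃ = b ∧
    m₁ ⊔ m₂ = t ∧ m₁ ⊔ m₃ = t ∧ m₂ ⊔ m₃ = t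

/-
Both sides are equivalent to: every `x` has a least (for `⊆`) decomposition into
join-irreducibles, which is then its unique minimal one.

In a lower locally distributive lattice every cover `z ⋖ u` is crossed by exactly one
join-irreducible `j ≤ u` with `j ≰ z`. Indeed, by induction on `u`, two such `j ≠ k` lie below
distinct lower covers `v, w` of `u`; lower semi-modularity makes all pairwise meets of `z, v, w`
lower covers, the induction hypothesis at `v ⊓ w ⋖ v` forces `z ⊓ v ≤ v ⊓ w`, hence
`z ⊓ v = v ⊓ w = z ⊓ w` and `z, v, w` span an `M₃`. Each element `s` of a minimal decomposition
of `x` crosses some cover `z ⋖ x`, and every decomposition of `x` contains an element crossing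
that cover, which must be `s`.

Conversely, if least decompositions exist: the least decomposition of the top of an `M₃` lies in
the union of decompositions of any two middle elements, so it lies below the bottom. If
`x ⊓ y < m < x` with `y ⋖ x ⊔ y`, pick a join-irreducible `e ≤ x`, `e ≰ m`; then
`e ⊔ y = m ⊔ y = x ⊔ y`, and an element of the least decomposition of `x ⊔ y` outside `↓y`
must be `e` and lie in a decomposition of `m`.
-/

theorem existsUnique_minimal_mem_iff_exists_isLeast {α : Type*} [PartialOrder α]
    [WellFoundedLT α] {s : Set α} : (∃! a, Minimal (· ∈ s) a) ↔ ∃ a, IsLeast s a := by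
  constructor
  · rintro ⟨a, ha, huniq⟩
    refine ⟨a, ha.prop, fun x hx => ?_⟩
    obtain ⟨b, hbx, hb⟩ := exists_minimal_le_of_wellFoundedLT (· ∈ s) x hx
    exact huniq b hb ▸ hbx
  · rintro ⟨a, ha, hleast⟩
    exact ⟨a, ⟨ha, fun x hx _ => hleast hx⟩, fun b hb => hb.eq_of_ge ha (hleast hb.prop)⟩

theorem CovBy.eq_of_le_of_covBy {α : Type*} [PartialOrder α] {a b c : α} (ha : a ⋖ c)
    (hb : b ⋖ c) (hab : a ≤ b) : a = b :=
  hab.eq_of_not_lt fun h => ha.2 h hb.lt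

theorem CovBy.sup_eq_of_le_of_not_le {α : Type*} [SemilatticeSup α] {a b c : α} (hb : b ⋖ c)
    (hac : a ≤ c) (hab : ¬ a ≤ b) : a ⊔ b = c :=
  (hb.eq_or_eq le_sup_right (sup_le hac hb.le)).resolve_left fun h => hab (h ▸ le_sup_left)

section Lattice

variable {L : Type*} [Lattice L]

def supIrredDecomps (x : L) : Set (Finset L) :=
  {S | (∀ i ∈ S, SupIrred i) ∧ IsLUB (S : Set L) x}

theorem mem_supIrredDecomps {x : L} {S : Finset L} :
    S ∈ supIrredDecomps x ↔ (∀ i ∈ S, SupIrred i) ∧ IsLUB (S : Set L) x :=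
  Iff.rfl

theorem minimal_mem_supIrredDecomps_iff {x : L} {S : Finset L} :
    Minimal (· ∈ supIrredDecomps x) S ↔
      (∀ i ∈ S, SupIrred i) ∧ IsLUB (S : Set L) x ∧ ∀ T ⊂ S, ¬ IsLUB (T : Set L) x := by
  rw [minimal_iff_forall_lt, mem_supIrredDecomps, and_assoc]
  refine and_congr_right fun hS => and_congr_right fun _ => forall₂_congr fun T hT => ?_
  exact not_congr ⟨And.right, fun h => ⟨fun i hi => hS i (hT.subset hi), h⟩⟩

theorem singleton_mem_supIrredDecomps {e : L} (he : SupIrred e) :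
    {e} ∈ supIrredDecomps e :=
  ⟨by simp [he], by simp [isLUB_singleton]⟩

theorem union_mem_supIrredDecomps [DecidableEq L] {a b : L} {A B : Finset L}
    (hA : A ∈ supIrredDecomps a) (hB : B ∈ supIrredDecomps b) :
    A ∪ B ∈ supIrredDecomps (a ⊔ b) :=
  ⟨fun i hi => (Finset.mem_union.1 hi).elim (hA.1 i) (hB.1 i),
    by simpa only [Finset.coe_union] using hA.2.union hB.2⟩

theorem LowerSemimodular.inf_covBy_of_covBy (hL : LowerSemimodular L) {c d u : L} (hc : c ⋖ u)
    (hd : d ⋖ u) (hcd : c ≠ d) : c ⊓ d ⋖ c ∧ c ⊓ d ⋖ d := by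
  have hsup := hc.wcovBy.sup_eq hd.wcovBy hcd
  exact hL c d (hsup ▸ hc) (hsup ▸ hd)

theorem hasM3_of_covBy {a b c u : L} (ha : a ⋖ u) (hb : b ⋖ u) (hc : c ⋖ u) (hab : a ≠ b)
    (hac : a ≠ c) (hbc : b ≠ c) (hab_ac : a ⊓ b = a ⊓ c) (hab_bc : a ⊓ b = b ⊓ c) : HasM3 L :=
  ⟨a ⊓ b, a, b, c, u,
    fun h => hab (ha.eq_of_le_of_covBy hb (inf_eq_left.1 h)),
    fun h => hab (hb.eq_of_le_of_covBy ha (inf_eq_right.1 h)).symm,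
    fun h => hbc (hc.eq_of_le_of_covBy hb (inf_eq_right.1 (hab_bc.symm.trans h))).symm,
    (inf_le_left.trans_lt ha.lt).ne, hab, hac, hbc, ha.ne, hb.ne, hc.ne,
    rfl, hab_ac.symm, hab_bc.symm,
    ha.wcovBy.sup_eq hb.wcovBy hab, ha.wcovBy.sup_eq hc.wcovBy hac,
    hb.wcovBy.sup_eq hc.wcovBy hbc⟩

section WellFoundedGT

variable [WellFoundedGT L]

theorem exists_covBy_not_le_of_isLUB_insert {A : Set L} {s x : L}
    (hx : IsLUB (insert s A) x) (hA : ¬ IsLUB A x) : ∃ z, z ⋖ x ∧ ¬ s ≤ z := by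
  have hxA : x ∈ upperBounds A := fun a ha => hx.1 (Set.mem_insert_of_mem s ha)
  have hx_le {c : L} (hcA : c ∈ upperBounds A) (hsc : s ≤ c) : x ≤ c :=
    hx.2 (by rw [upperBounds_insert]; exact ⟨hsc, hcA⟩)
  obtain ⟨b, hbA, hxb⟩ : ∃ b ∈ upperBounds A, ¬ x ≤ b := by
    by_contra! h
    exact hA ⟨hxA, h⟩
  let P : L → Prop := fun z => z ∈ upperBounds A ∧ z ≤ x ∧ ¬ s ≤ z
  have hbx : P (b ⊓ x) := by
    have hbxA : b ⊓ x ∈ upperBounds A := fun a ha => le_inf (hbA ha) (hxA ha)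
    exact ⟨hbxA, inf_le_right, fun hs => hxb ((hx_le hbxA hs).trans inf_le_left)⟩
  obtain ⟨z, -, hz⟩ := exists_maximal_ge_of_wellFoundedGT P _ hbx
  obtain ⟨hzA, hzx, hsz⟩ := hz.prop
  have hzx : z < x := hzx.lt_of_ne fun h => hsz (h ▸ hx.1 (Set.mem_insert s A))
  refine ⟨z, ⟨hzx, fun c hzc hcx => ?_⟩, hsz⟩
  have hcA : c ∈ upperBounds A := fun a ha => (hzA ha).trans hzc.le
  have hsc : s ≤ c := by
    by_contra hsc
    exact hz.not_gt ⟨hcA, hcx.le, hsc⟩ hzc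
  exact hcx.not_ge (hx_le hcA hsc)

theorem SupIrred.le_or_eq_of_covBy {u z k : L} (hu : SupIrred u) (hz : z ⋖ u) (hk : k ≤ u) :
    k ≤ z ∨ k = u := by
  refine hk.lt_or_eq.imp_left fun hk => ?_
  obtain ⟨c, hkc, hc⟩ := exists_le_covBy_of_lt hk
  obtain rfl | hcz := eq_or_ne c z
  · exact hkc
  · exact ((hu.2 (hc.wcovBy.sup_eq hz.wcovBy hcz)).elim hc.ne hz.ne).elim

end WellFoundedGT

section Finite

variable [Finite L]

theorem supIrredDecomps_nonempty (x : L) : (supIrredDecomps x).Nonempty := by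
  have : Nonempty L := ⟨x⟩
  have := Fintype.ofFinite L
  let := Fintype.toBoundedOrder L
  obtain ⟨S, hSx, hS⟩ := exists_supIrred_decomposition x
  exact ⟨S, fun i hi => hS hi, hSx ▸ Finset.isLUB_sup_id⟩

theorem exists_supIrred_le_not_le {p q : L} (h : ¬ p ≤ q) :
    ∃ i, SupIrred i ∧ i ≤ p ∧ ¬ i ≤ q := by
  obtain ⟨S, hSirr, hS⟩ := supIrredDecomps_nonempty p
  by_contra! hall
  exact h (hS.2 fun i hi => hall i (hSirr i hi) (hS.1 hi))

theorem Minimal.exists_covBy_not_le {x s : L} {S : Finset L}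
    (hS : Minimal (· ∈ supIrredDecomps x) S) (hs : s ∈ S) : ∃ z, z ⋖ x ∧ ¬ s ≤ z := by
  classical
  refine exists_covBy_not_le_of_isLUB_insert (A := ↑(S.erase s)) ?_ fun h => ?_
  · rw [← Finset.coe_insert, Finset.insert_erase hs]
    exact hS.prop.2
  · exact hS.not_prop_of_lt (Finset.erase_ssubset hs)
      ⟨fun i hi => hS.prop.1 i (Finset.mem_of_mem_erase hi), h⟩

theorem LowerSemimodular.supIrred_eq_of_covBy (hL : LowerSemimodular L) (hM3 : ¬ HasM3 L)
    {z u j k : L} (hz : z ⋖ u) (hj : SupIrred j) (hk : SupIrred k) (hju : j ≤ u) (hku : k ≤ u)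
    (hjz : ¬ j ≤ z) (hkz : ¬ k ≤ z) : j = k := by
  induction u using WellFoundedLT.induction generalizing z j k with
  | _ u ih =>
  by_contra hne
  have hju : j < u := hju.lt_of_ne fun h =>
    hne (h.trans (((h ▸ hj).le_or_eq_of_covBy hz hku).resolve_left hkz).symm)
  have hku : k < u := hku.lt_of_ne fun h =>
    hne (h.trans (((h ▸ hk).le_or_eq_of_covBy hz hju.le).resolve_left hjz).symm).symm
  obtain ⟨v, hjv, hv⟩ := exists_le_covBy_of_lt hju
  obtain ⟨w, hkw, hw⟩ := exists_le_covBy_of_lt hku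
  have hvz : v ≠ z := by rintro rfl; exact hjz hjv
  have hwz : w ≠ z := by rintro rfl; exact hkz hkw
  have not_both_le (c : L) (hc : c ⋖ u) (hcz : c ≠ z) (hjc : j ≤ c) (hkc : k ≤ c) : False :=
    hne (ih c hc.lt (hL.inf_covBy_of_covBy hz hc hcz.symm).2 hj hk hjc hkc
      (fun h => hjz (h.trans inf_le_left)) (fun h => hkz (h.trans inf_le_left)))
  have hkv : ¬ k ≤ v := not_both_le v hv hvz hjv
  have hjw : ¬ j ≤ w := fun h => not_both_le w hw hwz h hkw
  have hvw : v ≠ w := by rintro rfl; exact hkv hkw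
  have hzv_le : z ⊓ v ≤ v ⊓ w := by
    by_contra h
    obtain ⟨i, hi, hizv, hivw⟩ := exists_supIrred_le_not_le h
    have hij : i = j := ih v hv.lt (hL.inf_covBy_of_covBy hv hw hvw).1 hi hj
      (hizv.trans inf_le_right) hjv hivw fun h => hjw (h.trans inf_le_right)
    exact hjz (hij ▸ hizv.trans inf_le_left)
  have hzv_vw : z ⊓ v = v ⊓ w := ((hL.inf_covBy_of_covBy hz hv hvz.symm).2).eq_of_le_of_covBy
    (hL.inf_covBy_of_covBy hv hw hvw).1 hzv_le
  have hzv_zw : z ⊓ v = z ⊓ w := ((hL.inf_covBy_of_covBy hz hv hvz.symm).1).eq_of_le_of_covBy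
    (hL.inf_covBy_of_covBy hz hw hwz.symm).1 (le_inf inf_le_left (hzv_le.trans inf_le_right))
  exact hM3 (hasM3_of_covBy hz hv hw hvz.symm hwz.symm hvw hzv_zw hzv_vw)

theorem LowerSemimodular.exists_isLeast_supIrredDecomps (hL : LowerSemimodular L)
    (hM3 : ¬ HasM3 L) (x : L) : ∃ S, IsLeast (supIrredDecomps x) S := by
  obtain ⟨A, hA⟩ := supIrredDecomps_nonempty x
  obtain ⟨S, -, hS⟩ := exists_minimal_le_of_wellFoundedLT (· ∈ supIrredDecomps x) A hA
  refine ⟨S, hS.prop, fun T hT s hs => ?_⟩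
  obtain ⟨z, hzx, hsz⟩ := hS.exists_covBy_not_le hs
  obtain ⟨t, ht, htz⟩ : ∃ t ∈ T, ¬ t ≤ z := by
    by_contra! h
    exact hzx.lt.not_ge (hT.2.2 fun t ht => h t ht)
  rwa [hL.supIrred_eq_of_covBy hM3 hzx (hS.prop.1 s hs) (hT.1 t ht) (hS.prop.2.1 hs)
    (hT.2.1 ht) hsz htz]

theorem not_hasM3_of_exists_isLeast (h : ∀ x : L, ∃ S, IsLeast (supIrredDecomps x) S) :
    ¬ HasM3 L := by
  classical
  rintro ⟨b, m₁, m₂, m₃, t, -, -, -, hbt, -, -, -, -, -, -, h₁₂, h₁₃, h₂₃, j₁₂, j₁₃, j₂₃⟩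
  obtain ⟨W, hW, hWleast⟩ := h t
  obtain ⟨S₁, hS₁⟩ := supIrredDecomps_nonempty m₁
  obtain ⟨S₂, hS₂⟩ := supIrredDecomps_nonempty m₂
  obtain ⟨S₃, hS₃⟩ := supIrredDecomps_nonempty m₃
  have le_or_le {a c : L} {A C : Finset L} (hA : A ∈ supIrredDecomps a)
      (hC : C ∈ supIrredDecomps c) (hac : a ⊔ c = t) {w : L} (hw : w ∈ W) : w ≤ a ∨ w ≤ c :=
    (Finset.mem_union.1 (hWleast (hac ▸ union_mem_supIrredDecomps hA hC) hw)).imp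
      (hA.2.1 ·) (hC.2.1 ·)
  have htb : t ≤ b := hW.2.2 fun w hw => by
    rcases le_or_le hS₁ hS₂ j₁₂ hw with h₁ | h₂
    · rcases le_or_le hS₂ hS₃ j₂₃ hw with h₂ | h₃
      · exact h₁₂ ▸ le_inf h₁ h₂
      · exact h₁₃ ▸ le_inf h₁ h₃
    · rcases le_or_le hS₁ hS₃ j₁₃ hw with h₁ | h₃
      · exact h₁₂ ▸ le_inf h₁ h₂
      · exact h₂₃ ▸ le_inf h₂ h₃
  exact hbt (htb.antisymm' (h₁₂ ▸ j₁₂ ▸ inf_le_left.trans le_sup_left))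

theorem inf_covBy_of_exists_isLeast (h : ∀ x : L, ∃ S, IsLeast (supIrredDecomps x) S)
    {x y : L} (hy : y ⋖ x ⊔ y) : x ⊓ y ⋖ x := by
  classical
  have hxy : ¬ x ≤ y := fun hxy => hy.ne (sup_eq_right.2 hxy).symm
  refine ⟨inf_le_left.lt_of_ne fun hxy' => hxy (hxy' ▸ inf_le_right), fun m hm hmx => ?_⟩
  obtain ⟨e, he, hex, hem⟩ := exists_supIrred_le_not_le hmx.not_ge
  have hey : e ⊔ y = x ⊔ y :=
    hy.sup_eq_of_le_of_not_le (hex.trans le_sup_left) fun h => hem ((le_inf hex h).trans hm.le)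
  have hmy : m ⊔ y = x ⊔ y :=
    hy.sup_eq_of_le_of_not_le (hmx.le.trans le_sup_left) fun h => hm.not_ge (le_inf hmx.le h)
  obtain ⟨Y, hY⟩ := supIrredDecomps_nonempty y
  obtain ⟨D, hD⟩ := supIrredDecomps_nonempty m
  obtain ⟨W, hW, hWleast⟩ := h (x ⊔ y)
  obtain ⟨w, hw, hwy⟩ : ∃ w ∈ W, ¬ w ≤ y := by
    by_contra! hWy
    exact hy.lt.not_ge (hW.2.2 fun w hw => hWy w hw)
  have hwY : w ∉ Y := fun hwY => hwy (hY.2.1 hwY)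
  have hwe : w ∈ {e} ∪ Y :=
    hWleast (hey ▸ union_mem_supIrredDecomps (singleton_mem_supIrredDecomps he) hY) hw
  have hwD : w ∈ D ∪ Y := hWleast (hmy ▸ union_mem_supIrredDecomps hD hY) hw
  simp only [Finset.mem_union, Finset.mem_singleton, hwY, or_false] at hwe hwD
  exact hem (hwe ▸ hD.2.1 hwD)

theorem lowerSemimodular_of_exists_isLeast
    (h : ∀ x : L, ∃ S, IsLeast (supIrredDecomps x) S) : LowerSemimodular L := by
  intro x y hx hy
  refine ⟨inf_covBy_of_exists_isLeast h hy, ?_⟩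
  rw [inf_comm]
  exact inf_covBy_of_exists_isLeast h (sup_comm x y ▸ hx)

end Finite

end Lattice

theorem lowerLocallyDistributive_iff_unique_minimal_decomposition_general
    (L : Type*) [Lattice L] [Fintype L] :
    (LowerSemimodular L ∧ ¬ HasM3 L) ↔
      ∀ x : L, ∃! S : Finset L,
        (∀ i ∈ S, SupIrred i) ∧ IsLUB (S : Set L) x ∧
          ∀ T ⊂ S, ¬ IsLUB (T : Set L) x := by
  simp_rw [← minimal_mem_supIrredDecomps_iff, existsUnique_minimal_mem_iff_exists_isLeast]
  exact ⟨fun ⟨hL, hM3⟩ => hL.exists_isLeast_supIrredDecomps hM3,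
    fun h => ⟨lowerSemimodular_of_exists_isLeast h, not_hasM3_of_exists_isLeast h⟩⟩

/-- Dilworth: a finite lattice is lower locally distributive (lower semi-modular and
with no `M₃` sublattice) iff every element has a unique minimal (irredundant)
decomposition as a supremum of join-irreducible elements. -/
theorem lowerLocallyDistributive_iff_unique_minimal_decomposition
    (L : Type*) [Lattice L] [Fintype L] [DecidableEq L] :
    (LowerSemimodular L ∧ ¬ HasM3 L) ↔
      ∀ x : L, ∃! S : Finset L,
        (∀ i ∈ S, SupIrred i) ∧ IsLUB (S : Set L) x ∧
          ∀ T ⊂ S, ¬ IsLUB (T : Set L) x :=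
  lowerLocallyDistributive_iff_unique_minimal_decomposition_general L
end

section
/- Let L be a finite lattice, x ∈ L, and y with minimal join-irreducible decomposition η*(y). If η(x) ∩ η*(y) ≠ ∅, then the iterated derivative Δ_y f(x) = 0 for every f : L → ℝ. -/
/-- Lower locally distributive: lower semi-modular and no `M₃` sublattice. -/
def LowerLocallyDistributive (L : Type*) [Lattice L] : Prop :=
  LowerSemimodular L ∧ ¬ HasM3 L

/-- The derivative of `f` w.r.t. `i` at `x`: `Δ_i f(x) = f(x ⊔ i) - f(x)`. -/
def deriv' {L : Type*} [Lattice L] (i : L) (f : L → ℝ) : L → ℝ :=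
  fun x => f (x ⊔ i) - f x

/-- Iterated derivative w.r.t. a list of (join-irreducible) elements. -/
def derivList {L : Type*} [Lattice L] (l : List L) (f : L → ℝ) : L → ℝ :=
  l.foldr deriv' f

theorem derivList_cons {L : Type*} [Lattice L] (a : L) (l : List L) (f : L → ℝ) (x : L) :
    derivList (a :: l) f x = derivList l f (x ⊔ a) - derivList l f x :=
  rfl

/-- Whichever layer of the iterated difference `i` sits in, the outer layers only evaluate
the inner ones at joins `x ⊔ a`, which stay above `i`. -/
theorem derivList_eq_zero_of_le {L : Type*} [Lattice L] {l : List L} {i : L} (hi : i ∈ l)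
    (f : L → ℝ) {x : L} (hix : i ≤ x) : derivList l f x = 0 := by
  induction l generalizing x with
  | nil => simp at hi
  | cons a t ih =>
    rw [derivList_cons]
    rcases List.mem_cons.mp hi with rfl | hit
    · rw [sup_eq_left.mpr hix, sub_self]
    · rw [ih hit (hix.trans le_sup_left), ih hit hix, sub_self]

theorem derivList_eq_zero_of_inter_general (L : Type*) [Lattice L] (f : L → ℝ) (x : L)
    (l : List L)
    (hmeet : ∃ i ∈ l, i ≤ x) :
    derivList l f x = 0 := by
  obtain ⟨i, hi, hix⟩ := hmeet
  exact derivList_eq_zero_of_le hi f hix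

/-- If the minimal join-irreducible decomposition `η*(y)` of `y` meets `η(x)`
(i.e. some element of it lies below `x`), then the iterated derivative
`Δ_y f(x)` vanishes. -/
theorem derivList_eq_zero_of_inter (L : Type*) [Lattice L] [Fintype L] [DecidableEq L]
    (hL : LowerLocallyDistributive L) (f : L → ℝ) (x y : L)
    (l : List L) (hnd : l.Nodup)
    (hirr : ∀ i ∈ l, SupIrred i)
    (hlub : IsLUB (↑l.toFinset : Set L) y)
    (hmin : ∀ T ⊂ l.toFinset, ¬ IsLUB (↑T : Set L) y)
    (hmeet : ∃ i ∈ l, i ≤ x) :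
    derivList l f x = 0 :=
  derivList_eq_zero_of_inter_general L f x l hmeet
end

section
/- Let L be a finite distributive lattice, f : L → ℝ with Möbius transform m (the unique function satisfying f(x) = Σ_{y≤x} m(y)), and i a join-irreducible element such that x∨i covers x. Then Δ_i f(x) = Σ_{y ∈ [i, x∨i]} m(y). -/
open scoped Classical

/-!
Below `x ⊔ i` an element `y` either lies below `x` or satisfies `x ⊔ y = x ⊔ i`, because
`x ⊔ i` covers `x`. In the second case `i ≤ x ⊔ y`, and since join-irreducibles of a
distributive lattice are join-prime while `i ≰ x`, we get `i ≤ y`. Hence the elements below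
`x ⊔ i` but not below `x` are exactly those of `[i, x ⊔ i]`, and `f (x ⊔ i) - f x` is the sum
of `m` over them.
-/

section CovBy

variable {L : Type*} [Lattice L] {i x y : L}

theorem SupPrime.le_of_covBy_sup (hi : SupPrime i) (hcov : x ⋖ x ⊔ i) (hy : y ≤ x ⊔ i)
    (hyx : ¬ y ≤ x) : i ≤ y := by
  have hxy : x ⊔ y = x ⊔ i := by
    refine (hcov.eq_or_eq le_sup_left (sup_le le_sup_left hy)).resolve_left fun h => hyx ?_
    exact h ▸ le_sup_right
  have hix : ¬ i ≤ x := fun h => hcov.lt.not_ge (sup_le le_rfl h)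
  exact (hi.le_sup.mp (hxy ▸ le_sup_right)).resolve_left hix

theorem SupPrime.le_iff_not_le_of_covBy_sup (hi : SupPrime i) (hcov : x ⋖ x ⊔ i)
    (hy : y ≤ x ⊔ i) : i ≤ y ↔ ¬ y ≤ x :=
  ⟨fun hiy hyx => hcov.lt.not_ge (sup_le le_rfl (hiy.trans hyx)), hi.le_of_covBy_sup hcov hy⟩

end CovBy

theorem Finset.sum_filter_le_sub_sum_filter_le {L M : Type*} [Preorder L] [Fintype L]
    [AddCommGroup M] (m : L → M) {a b : L} (hab : a ≤ b) :
    ∑ y ∈ univ.filter (· ≤ b), m y - ∑ y ∈ univ.filter (· ≤ a), m y =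
      ∑ y ∈ univ.filter (fun y => ¬ y ≤ a ∧ y ≤ b), m y := by
  have hsub : univ.filter (· ≤ a) ⊆ univ.filter (· ≤ b) :=
    monotone_filter_right _ fun _ _ hya => hya.trans hab
  rw [← sum_sdiff_eq_sub hsub]
  congr 1
  ext y
  simp only [mem_sdiff, mem_filter, mem_univ, true_and, and_comm]

/-- If `m` is the Möbius transform of `f` on a finite distributive lattice and `x ⊔ i`
covers `x` for a join-irreducible `i`, then
`Δ_i f(x) = f(x ⊔ i) − f(x) = Σ_{y ∈ [i, x ⊔ i]} m(y)`. -/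
theorem deriv_eq_sum_mobius (L : Type*) [DistribLattice L] [Fintype L]
    (f m : L → ℝ)
    (hm : ∀ x : L, f x = ∑ y ∈ Finset.univ.filter (fun y => y ≤ x), m y)
    (i x : L) (hi : SupIrred i) (hcov : x ⋖ x ⊔ i) :
    f (x ⊔ i) - f x = ∑ y ∈ Finset.univ.filter (fun y => i ≤ y ∧ y ≤ x ⊔ i), m y := by
  rw [hm, hm, Finset.sum_filter_le_sub_sum_filter_le m le_sup_left]
  refine Finset.sum_congr (Finset.filter_congr fun y _ => ?_) fun _ _ => rfl
  exact and_congr_left fun hy => (hi.supPrime.le_iff_not_le_of_covBy_sup hcov hy).symm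
end

section
/- Let L be a finite distributive lattice, f : L → ℝ with Möbius transform m, and x, y ∈ L such that the iterated derivative Δ_y f(x) is Boolean (the interval [x, x∨y] is isomorphic to 2^{|η*(y)|}). Then Δ_y f(x) = Σ_{z ∈ [y, x∨y]} m(z). -/
/-!
Expanding the iterated derivative gives `Δ_y f(x) = ∑_{T ⊆ s} (-1)^|s \ T| f(x ⊔ ⋁T)` with
`s = η*(y)`. In the Boolean case `T ↦ x ⊔ ⋁T` is an order isomorphism from `𝒫 s` onto
`[x, x ⊔ y] ≅ 2^|s|`: each `x ⊔ i` is join-prime there, hence an atom or the bottom, and as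
these `|s|` elements join to the top they are all `|s|` atoms, pairwise distinct. Writing `f`
through `m` and exchanging the sums, the coefficient of `m z` becomes an alternating sum over
an interval `[T₀, s]` of `𝒫 s`, where `x ⊔ z = x ⊔ ⋁T₀`; it vanishes unless `T₀ = s`, i.e.
unless `y ≤ z ≤ x ⊔ y`.
-/

open scoped Classical

open Finset

namespace Finset

variable {α : Type*} [DecidableEq α]

theorem sum_Icc_neg_one_pow_card_sdiff {R : Type*} [CommRing R] {s t : Finset α} (h : s ⊆ t) :
    ∑ u ∈ Icc s t, (-1 : R) ^ #(t \ u) = if s = t then 1 else 0 := by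
  have hsum :
      ∑ u ∈ Icc s t, (-1 : R) ^ #(t \ u) = ∑ v ∈ (t \ s).powerset, (-1 : R) ^ #v := by
    refine sum_nbij' (t \ ·) (t \ ·) (fun u hu => ?_) (fun v hv => ?_) (fun u hu => ?_)
      (fun v hv => ?_) fun u _ => rfl
    · rw [mem_Icc] at hu
      exact mem_powerset.2 (sdiff_subset_sdiff subset_rfl hu.1)
    · rw [mem_powerset] at hv
      exact mem_Icc.2 ⟨subset_sdiff.2 ⟨h, disjoint_sdiff.mono_right hv⟩, sdiff_subset⟩
    · exact sdiff_sdiff_eq_self (mem_Icc.1 hu).2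
    · exact sdiff_sdiff_eq_self ((mem_powerset.1 hv).trans sdiff_subset)
  have hint := congrArg (Int.cast : ℤ → R) (sum_powerset_neg_one_pow_card (x := t \ s))
  push_cast at hint
  rw [hsum, hint]
  exact if_congr
    (sdiff_eq_empty_iff_subset.trans ⟨(subset_antisymm h ·), (· ▸ subset_rfl)⟩) rfl rfl

variable {β : Type*} [Fintype β]

theorem card_le_one_of_forall_subset_union [DecidableEq β] {t : Finset β}
    (h : ∀ B C : Finset β, t ⊆ B ∪ C → t ⊆ B ∨ t ⊆ C) : #t ≤ 1 := by
  refine card_le_one.2 fun k hk k' hk' => by_contra fun hne => ?_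
  rcases h {k}ᶜ {k'}ᶜ (fun z _ => by by_cases hz : z = k <;> simp_all) with h | h
  · simpa using h hk
  · simpa using h hk'

theorem exists_mem_forall_mem_eq_of_card_le {ι : Type*} {s : Finset ι} {a : ι → Finset β}
    (ha : ∀ i ∈ s, #(a i) ≤ 1) (hcover : ∀ k, ∃ i ∈ s, k ∈ a i)
    (hcard : #s ≤ Fintype.card β) :
    ∀ i ∈ s, ∃ k ∈ a i, ∀ j ∈ s, k ∈ a j → j = i := by
  choose g hgs hga using hcover
  have hunique : ∀ k k', k' ∈ a (g k) → k' = k := fun k k' hk' =>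
    card_le_one.1 (ha _ (hgs k)) k' hk' k (hga k)
  have hg : Function.Injective g := fun k k' hkk' =>
    (hunique k k' (by rw [hkk']; exact hga k')).symm
  have himage : univ.image g = s :=
    eq_of_subset_of_card_le (image_subset_iff.2 fun k _ => hgs k) <| by
      rwa [card_image_of_injective _ hg, card_univ]
  intro i hi
  obtain ⟨k, -, rfl⟩ := mem_image.1 (himage ▸ hi)
  refine ⟨k, hga k, fun j hj hkj => ?_⟩
  obtain ⟨k', -, rfl⟩ := mem_image.1 (himage ▸ hj)
  rw [hunique k' k hkj]

end Finset

theorem derivList_eq_sum_powerset {L : Type*} [Lattice L] [OrderBot L] [DecidableEq L]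
    (f : L → ℝ) {l : List L} (hl : l.Nodup) (x : L) :
    derivList l f x =
      ∑ T ∈ l.toFinset.powerset, (-1) ^ #(l.toFinset \ T) * f (x ⊔ T.sup id) := by
  induction l generalizing x with
  | nil => simp [derivList]
  | cons i l ih =>
    obtain ⟨hi, hl⟩ := List.nodup_cons.1 hl
    have hi : i ∉ l.toFinset := List.mem_toFinset.not.2 hi
    have hstep : derivList (i :: l) f x = derivList l f (x ⊔ i) - derivList l f x := rfl
    have hout : ∀ T ∈ l.toFinset.powerset, #(insert i l.toFinset \ T) = #(l.toFinset \ T) + 1 :=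
      fun T hT => by
        rw [insert_sdiff_of_notMem _ fun hiT => hi (mem_powerset.1 hT hiT), card_insert_of_notMem
          fun hiT => hi (mem_sdiff.1 hiT).1]
    have hin : ∀ T, #(insert i l.toFinset \ insert i T) = #(l.toFinset \ T) := fun T => by
      rw [insert_sdiff_insert, sdiff_insert_of_notMem hi]
    rw [hstep, ih hl, ih hl, List.toFinset_cons, sum_powerset_insert hi, sub_eq_neg_add,
      ← sum_neg_distrib]
    congr 1
    · refine sum_congr rfl fun T hT => ?_
      rw [hout T hT, pow_succ]
      ring
    · refine sum_congr rfl fun T _ => ?_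
      rw [hin T, sup_insert, id, ← sup_assoc]

section BooleanInterval

variable {L : Type*} [DistribLattice L]

def retractIcc (x y z : L) : Set.Icc x (x ⊔ y) :=
  ⟨x ⊔ z ⊓ y, le_sup_left, sup_le_sup_left inf_le_right x⟩

theorem coe_retractIcc_of_le {x y z : L} (h : z ≤ y) : (retractIcc x y z : L) = x ⊔ z :=
  congrArg (x ⊔ ·) (inf_eq_left.2 h)

variable {x y : L} {β : Type*} [Fintype β]

theorem card_retractIcc_le_one [DecidableEq β] (φ : Set.Icc x (x ⊔ y) ≃o Finset β) {i : L}
    (hi : SupPrime i) (hiy : i ≤ y) : #(φ (retractIcc x y i)) ≤ 1 := by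
  refine card_le_one_of_forall_subset_union fun B C hBC => ?_
  rw [← sup_eq_union, ← φ.le_symm_apply, map_sup, ← Subtype.coe_le_coe, Set.Icc.coe_sup,
    coe_retractIcc_of_le hiy] at hBC
  simp only [← φ.le_symm_apply, ← Subtype.coe_le_coe, coe_retractIcc_of_le hiy]
  exact (hi.le_sup.1 (le_sup_right.trans hBC)).imp (sup_le (φ.symm B).2.1) (sup_le (φ.symm C).2.1)

theorem exists_mem_map_retractIcc {s : Finset L} (hy : IsLUB (s : Set L) y)
    (φ : Set.Icc x (x ⊔ y) ≃o Finset β) (k : β) :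
    ∃ i ∈ s, k ∈ φ (retractIcc x y i) := by
  have : Fact (x ≤ x ⊔ y) := ⟨le_sup_left⟩
  by_contra! h
  have htop : ⊤ ≤ φ.symm {k}ᶜ := by
    rw [← Subtype.coe_le_coe, Set.Icc.coe_top]
    refine sup_le (φ.symm {k}ᶜ).2.1 (hy.2 fun i hi => ?_)
    have hle : retractIcc x y i ≤ φ.symm {k}ᶜ := φ.le_symm_apply.2 (by simpa using h i hi)
    exact le_sup_right.trans ((coe_retractIcc_of_le (hy.1 hi)).symm.trans_le hle)
  have hk := φ.le_symm_apply.1 htop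
  rw [φ.map_top, top_eq_univ] at hk
  simpa using hk (mem_univ k)

end BooleanInterval

/-- `Δ_y f(x)` is Boolean, `s` playing the role of `η*(y)`. -/
structure IsBooleanDeriv {L : Type*} [Lattice L] (x y : L) (s : Finset L) : Prop where
  supIrred : ∀ i ∈ s, SupIrred i
  isLUB : IsLUB (s : Set L) y
  nonempty_orderIso : Nonempty (Set.Icc x (x ⊔ y) ≃o Finset (Fin #s))

namespace IsBooleanDeriv

variable {L : Type*} [DistribLattice L] {x y : L} {s : Finset L}

theorem supPrime (hB : IsBooleanDeriv x y s) {i : L} (hi : i ∈ s) : SupPrime i :=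
  supPrime_iff_supIrred.2 (hB.supIrred i hi)

variable [OrderBot L]

theorem mem_of_le_sup_finset_sup (hB : IsBooleanDeriv x y s) {i : L} (hi : i ∈ s)
    {T : Finset L} (hT : T ⊆ s) (h : i ≤ x ⊔ T.sup id) : i ∈ T := by
  obtain ⟨φ⟩ := hB.nonempty_orderIso
  have : Fact (x ≤ x ⊔ y) := ⟨le_sup_left⟩
  -- the `#s` sets `φ (x ⊔ j)` have at most one point each and cover `Fin #s`
  obtain ⟨k, hk, hk_unique⟩ := exists_mem_forall_mem_eq_of_card_le
    (fun j hj => card_retractIcc_le_one φ (hB.supPrime hj) (hB.isLUB.1 hj))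
    (exists_mem_map_retractIcc hB.isLUB φ) (by simp) i hi
  have hk_mem : ∀ w, retractIcc x y i ≤ w → k ∈ φ w := fun w hw => φ.monotone hw hk
  rcases (hB.supPrime hi).le_sup.1 h with hix | hiT
  · have hbot : retractIcc x y i ≤ ⊥ := by
      rw [← Subtype.coe_le_coe, coe_retractIcc_of_le (hB.isLUB.1 hi), Set.Icc.coe_bot]
      exact sup_le le_rfl hix
    simpa using hk_mem ⊥ hbot
  · obtain ⟨j, hj, hij⟩ := (hB.supPrime hi).le_finset_sup.1 hiT
    have hle : retractIcc x y i ≤ retractIcc x y j := by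
      rw [← Subtype.coe_le_coe, coe_retractIcc_of_le (hB.isLUB.1 hi),
        coe_retractIcc_of_le (hB.isLUB.1 (hT hj))]
      exact sup_le_sup_left hij x
    exact hk_unique j (hT hj) (hk_mem _ hle) ▸ hj

theorem not_le_of_mem (hB : IsBooleanDeriv x y s) {i : L} (hi : i ∈ s) : ¬i ≤ x := fun h =>
  notMem_empty i (hB.mem_of_le_sup_finset_sup hi (empty_subset s) (by simpa using h))

theorem sup_finset_sup_le_iff (hB : IsBooleanDeriv x y s) {T T' : Finset L} (hT : T ⊆ s)
    (hT' : T' ⊆ s) : x ⊔ T.sup id ≤ x ⊔ T'.sup id ↔ T ⊆ T' :=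
  ⟨fun h _ hi =>
    hB.mem_of_le_sup_finset_sup (hT hi) hT' ((le_sup_of_le_right (le_sup hi)).trans h),
    fun h => sup_le_sup_left (sup_mono h) x⟩

theorem sup_finset_sup_mem_Icc (hB : IsBooleanDeriv x y s) {T : Finset L} (hT : T ⊆ s) :
    x ⊔ T.sup id ∈ Set.Icc x (x ⊔ y) :=
  ⟨le_sup_left, sup_le_sup_left (Finset.sup_le fun _ hi => hB.isLUB.1 (hT hi)) x⟩

-- `T ↦ x ⊔ ⋁ T` is injective from `𝒫 s` to `[x, x ⊔ y]`, and both have `2 ^ #s` elements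
theorem exists_sup_finset_sup_eq (hB : IsBooleanDeriv x y s) {z : L}
    (hz : z ∈ Set.Icc x (x ⊔ y)) :
    ∃ T ⊆ s, x ⊔ T.sup id = z := by
  obtain ⟨φ⟩ := hB.nonempty_orderIso
  have : Finite (Set.Icc x (x ⊔ y)) := Finite.of_equiv _ φ.symm.toEquiv
  let g : s.powerset → Set.Icc x (x ⊔ y) := fun T =>
    ⟨x ⊔ T.1.sup id, hB.sup_finset_sup_mem_Icc (mem_powerset.1 T.2)⟩
  have hg : Function.Injective g := fun T T' h => Subtype.ext <| subset_antisymm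
    ((hB.sup_finset_sup_le_iff (mem_powerset.1 T.2) (mem_powerset.1 T'.2)).1
      (congrArg Subtype.val h).le)
    ((hB.sup_finset_sup_le_iff (mem_powerset.1 T'.2) (mem_powerset.1 T.2)).1
      (congrArg Subtype.val h).ge)
  have hcard : Nat.card (Set.Icc x (x ⊔ y)) ≤ Nat.card s.powerset := by
    rw [Nat.card_congr φ.toEquiv, Nat.card_eq_fintype_card, Nat.card_eq_fintype_card,
      Fintype.card_coe, card_powerset, Fintype.card_finset, Fintype.card_fin]
  obtain ⟨T, hT⟩ := (hg.bijective_of_nat_card_le hcard).2 ⟨z, hz⟩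
  exact ⟨T.1, mem_powerset.1 T.2, congrArg Subtype.val hT⟩

theorem sum_neg_one_pow_filter_le [DecidableEq L] (hB : IsBooleanDeriv x y s) (z : L) :
    ∑ T ∈ s.powerset with z ≤ x ⊔ T.sup id, (-1 : ℝ) ^ #(s \ T) =
      if y ≤ z ∧ z ≤ x ⊔ y then 1 else 0 := by
  by_cases hz : z ≤ x ⊔ y
  · obtain ⟨T₀, hT₀, hxz⟩ :=
      hB.exists_sup_finset_sup_eq (z := x ⊔ z) ⟨le_sup_left, sup_le le_sup_left hz⟩
    have hfilter : {T ∈ s.powerset | z ≤ x ⊔ T.sup id} = Finset.Icc T₀ s := by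
      ext T
      simp only [mem_filter, mem_powerset, mem_Icc]
      constructor
      · rintro ⟨hT, hzT⟩
        exact ⟨(hB.sup_finset_sup_le_iff hT₀ hT).1 (hxz ▸ sup_le le_sup_left hzT), hT⟩
      · rintro ⟨h₀, hT⟩
        exact ⟨hT, le_sup_right.trans (hxz ▸ (hB.sup_finset_sup_le_iff hT₀ hT).2 h₀)⟩
    have hT₀_eq : T₀ = s ↔ y ≤ z := by
      constructor
      · rintro rfl
        refine hB.isLUB.2 fun i hi => ?_
        have hixz : i ≤ x ⊔ z := hxz ▸ le_sup_of_le_right (le_sup (f := id) hi)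
        exact ((hB.supPrime hi).le_sup.1 hixz).resolve_left (hB.not_le_of_mem hi)
      · intro hyz
        refine subset_antisymm hT₀ fun i hi => hB.mem_of_le_sup_finset_sup hi hT₀ ?_
        exact hxz ▸ ((hB.isLUB.1 hi).trans hyz).trans le_sup_right
    rw [hfilter, sum_Icc_neg_one_pow_card_sdiff hT₀]
    exact if_congr (hT₀_eq.trans (and_iff_left hz).symm) rfl rfl
  · rw [filter_false_of_mem fun T hT hzT =>
      hz (hzT.trans (hB.sup_finset_sup_mem_Icc (mem_powerset.1 hT)).2), sum_empty,
      if_neg fun h => hz h.2]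

end IsBooleanDeriv

theorem sum_mul_eq_sum_sum_filter_le {L ι R : Type*} [Preorder L] [Fintype L]
    [NonUnitalNonAssocSemiring R] {f m : L → R}
    (hm : ∀ w : L, f w = ∑ z ∈ Finset.univ.filter (fun z => z ≤ w), m z)
    (S : Finset ι) (c : ι → R) (w : ι → L) :
    ∑ t ∈ S, c t * f (w t) = ∑ z, (∑ t ∈ S with z ≤ w t, c t) * m z := by
  simp_rw [hm, mul_sum, sum_filter, sum_mul, ite_mul, zero_mul]
  exact sum_comm

theorem derivList_eq_sum_mobius_general (L : Type*) [DistribLattice L] [Fintype L] [DecidableEq L]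
    (f m : L → ℝ)
    (hm : ∀ w : L, f w = ∑ z ∈ Finset.univ.filter (fun z => z ≤ w), m z)
    (x y : L) (l : List L) (hnd : l.Nodup)
    (hirr : ∀ i ∈ l, SupIrred i)
    (hlub : IsLUB (↑l.toFinset : Set L) y)
    (hbool : Nonempty ((Set.Icc x (x ⊔ y)) ≃o Finset (Fin l.length))) :
    derivList l f x = ∑ z ∈ Finset.univ.filter (fun z => y ≤ z ∧ z ≤ x ⊔ y), m z := by
  have : Nonempty L := ⟨x⟩
  let _ : OrderBot L := Fintype.toOrderBot L
  have hB : IsBooleanDeriv x y l.toFinset :=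
    ⟨fun i hi => hirr i (List.mem_toFinset.1 hi), hlub,
      List.toFinset_card_of_nodup hnd ▸ hbool⟩
  rw [derivList_eq_sum_powerset f hnd, sum_mul_eq_sum_sum_filter_le hm, sum_filter]
  refine sum_congr rfl fun z _ => ?_
  rw [hB.sum_neg_one_pow_filter_le z, boole_mul]

/-- If the iterated derivative `Δ_y f(x)` is Boolean (the interval `[x, x ⊔ y]` is
isomorphic to `2^{|η*(y)|}`), then `Δ_y f(x) = Σ_{z ∈ [y, x ⊔ y]} m(z)`, where `m`
is the Möbius transform of `f`. -/
theorem derivList_eq_sum_mobius (L : Type*) [DistribLattice L] [Fintype L] [DecidableEq L]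
    (f m : L → ℝ)
    (hm : ∀ w : L, f w = ∑ z ∈ Finset.univ.filter (fun z => z ≤ w), m z)
    (x y : L) (l : List L) (hnd : l.Nodup)
    (hirr : ∀ i ∈ l, SupIrred i)
    (hlub : IsLUB (↑l.toFinset : Set L) y)
    (hmin : ∀ T ⊂ l.toFinset, ¬ IsLUB (↑T : Set L) y)
    (hbool : Nonempty ((Set.Icc x (x ⊔ y)) ≃o Finset (Fin l.length))) :
    derivList l f x = ∑ z ∈ Finset.univ.filter (fun z => y ≤ z ∧ z ≤ x ⊔ y), m z :=
  derivList_eq_sum_mobius_general L f m hm x y l hnd hirr hlub hbool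
end

section
/- For all integers n ≥ 1 and 0 ≤ k ≤ n−1, the combinatorial identity Σ_{i=0}^{k} (n−i−1)! · k! / (n! · (k−i)!) = 1/(n−k) holds. -/
/-!
Write `n = m + k + 1`. After substituting `j = k - i`, the `i`-th term is
`k! m! / n! * C(m + j, m)`, so the hockey-stick identity sums the terms to
`k! m! C(n, m + 1) / n! = m! / (m + 1)! = 1 / (n - k)`.
-/

open Nat Finset

theorem Nat.sum_range_sub_add_choose (m k : ℕ) :
    ∑ i ∈ range (k + 1), (k - i + m).choose m = (k + m + 1).choose (m + 1) := by
  rw [← sum_range_add_choose]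
  exact sum_range_reflect (fun i => (i + m).choose m) (k + 1)

theorem Nat.cast_add_factorial_div_factorial {K : Type*} [Field K] [CharZero K] (m j : ℕ) :
    ((m + j)! : K) / j ! = m ! * (j + m).choose m := by
  rw [div_eq_iff (by exact_mod_cast j.factorial_ne_zero), add_comm m j,
    ← add_choose_mul_factorial_mul_factorial j m]
  push_cast
  ring

theorem sum_range_add_sub_factorial_div {K : Type*} [Field K] [CharZero K] (m k : ℕ) :
    ∑ i ∈ range (k + 1), ((m + (k - i))! * k ! : K) / ((m + k + 1)! * (k - i)!)
      = 1 / (m + 1) := by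
  have hterm : ∀ i ∈ range (k + 1),
      ((m + (k - i))! * k ! : K) / ((m + k + 1)! * (k - i)!)
        = k ! * m ! / (m + k + 1)! * (k - i + m).choose m := by
    intro i _
    rw [mul_div_right_comm _ (m ! : K), mul_assoc, ← Nat.cast_add_factorial_div_factorial]
    field_simp
  have hchoose : ((k + m + 1).choose (m + 1) * k ! * (m + 1)! : K) = (m + k + 1)! := by
    rw [add_comm m k]
    exact_mod_cast add_choose_mul_factorial_mul_factorial k (m + 1)
  have hchoose_ne : ((k + m + 1).choose (m + 1) : K) ≠ 0 := by
    exact_mod_cast (choose_pos (by omega)).ne'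
  have hfac_ne (j : ℕ) : (j ! : K) ≠ 0 := by exact_mod_cast j.factorial_ne_zero
  rw [sum_congr rfl hterm, ← mul_sum, ← Nat.cast_sum, Nat.sum_range_sub_add_choose,
    ← hchoose, factorial_succ]
  push_cast
  field_simp [hfac_ne]

/-- Combinatorial identity: for `1 ≤ n` and `k ≤ n − 1`,
`Σ_{i=0}^{k} (n−i−1)!·k!/(n!·(k−i)!) = 1/(n−k)`. -/
theorem factorial_sum_identity (n k : ℕ) (hn : 1 ≤ n) (hk : k ≤ n - 1) :
    ∑ i ∈ Finset.range (k + 1),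
        (((n - i - 1)! * k ! : ℕ) : ℝ) / ((n ! * (k - i)! : ℕ) : ℝ)
      = 1 / ((n : ℝ) - (k : ℝ)) := by
  obtain ⟨m, rfl⟩ : ∃ m, n = m + k + 1 := ⟨n - k - 1, by omega⟩
  have hsub : ((m + k + 1 : ℕ) : ℝ) - k = m + 1 := by push_cast; ring
  rw [hsub, ← sum_range_add_sub_factorial_div m k]
  refine sum_congr rfl fun i hi => ?_
  rw [show m + k + 1 - i - 1 = m + (k - i) by simp at hi; omega]
  push_cast
  rfl
end

section
/- For any finite set J with |J| ≥ 1 and v : 2^J → ℝ, the derivative decomposition identity holds: Σ_{K⊆J} (−1)^{|K|} v(J\K) − (v(J) − v(∅)) + Σ_{∅≠K⊊J} Σ_{L⊆J\K} (−1)^{|L|} v(J\(K∪L)) = 0. -/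
/-!
Summed over all `K ⊆ J` (including `K = ∅` and `K = J`), the double sum collapses to `v J`:
regrouping by `S = K ∪ L` gives `∑_{S ⊆ J} v (J \ S) ∑_{L ⊆ S} (-1)^|L|`, and the inner
alternating sum vanishes unless `S = ∅`. The terms `K = ∅` and `K = J` are the first sum
and `v ∅`, which leaves exactly the identity.
-/

open Finset

section

variable {α : Type*} [DecidableEq α]

theorem Finset.sum_powerset_neg_one_pow_card' {R : Type*} [Ring R] (s : Finset α) :
    ∑ t ∈ s.powerset, (-1 : R) ^ #t = if s = ∅ then 1 else 0 := by
  have h := congrArg (Int.cast : ℤ → R) (sum_powerset_neg_one_pow_card (x := s))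
  push_cast at h
  simpa [apply_ite (Int.cast : ℤ → R)] using h

theorem Finset.sum_powerset_sum_powerset_sdiff {M : Type*} [AddCommMonoid M] (J : Finset α)
    (f : Finset α → Finset α → M) :
    ∑ K ∈ J.powerset, ∑ L ∈ (J \ K).powerset, f (K ∪ L) L
      = ∑ S ∈ J.powerset, ∑ L ∈ S.powerset, f S L := by
  rw [sum_sigma', sum_sigma']
  refine sum_nbij' (fun p => ⟨p.1 ∪ p.2, p.2⟩) (fun p => ⟨p.1 \ p.2, p.2⟩) ?_ ?_ ?_ ?_ ?_
  · rintro ⟨K, L⟩ h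
    simp only [mem_sigma, mem_powerset, subset_sdiff] at h ⊢
    exact ⟨union_subset h.1 h.2.1, subset_union_right⟩
  · rintro ⟨S, L⟩ h
    simp only [mem_sigma, mem_powerset, subset_sdiff] at h ⊢
    exact ⟨sdiff_subset.trans h.1, h.2.trans h.1, disjoint_sdiff⟩
  · rintro ⟨K, L⟩ h
    simp only [mem_sigma, mem_powerset, subset_sdiff] at h
    simp [union_sdiff_cancel_right h.2.2.symm]
  · rintro ⟨S, L⟩ h
    simp only [mem_sigma, mem_powerset] at h
    simp [sdiff_union_of_subset h.2]
  · intro _ _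
    rfl

theorem Finset.sum_powerset_sum_powerset_sdiff_neg_one_pow {R : Type*} [Ring R] (J : Finset α)
    (v : Finset α → R) :
    ∑ K ∈ J.powerset, ∑ L ∈ (J \ K).powerset, (-1 : R) ^ #L * v (J \ (K ∪ L)) = v J := by
  rw [sum_powerset_sum_powerset_sdiff J fun S L => (-1 : R) ^ #L * v (J \ S)]
  simp [← sum_mul, sum_powerset_neg_one_pow_card']

end

/-- Derivative decomposition identity used in the recursion formula for interaction:
`Σ_{K⊆J} (−1)^{|K|} v(J\K) − (v(J) − v(∅)) + Σ_{∅≠K⊊J} Σ_{L⊆J\K} (−1)^{|L|} v(J\(K∪L)) = 0`. -/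
theorem derivative_decomposition_identity {α : Type*} [DecidableEq α]
    (J : Finset α) (hJ : J.Nonempty) (v : Finset α → ℝ) :
    (∑ K ∈ J.powerset, (-1 : ℝ) ^ K.card * v (J \ K)) - (v J - v ∅)
        + ∑ K ∈ J.powerset.filter (fun K => K ≠ ∅ ∧ K ≠ J),
            ∑ M ∈ (J \ K).powerset, (-1 : ℝ) ^ M.card * v (J \ (K ∪ M)) = 0 := by
  have hJ_mem : J ∈ J.powerset.erase ∅ := mem_erase.2 ⟨hJ.ne_empty, mem_powerset_self J⟩
  have total := sum_powerset_sum_powerset_sdiff_neg_one_pow J v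
  rw [← add_sum_erase _ _ (empty_mem_powerset J), ← add_sum_erase _ _ hJ_mem] at total
  rw [← filter_filter, filter_ne', filter_ne']
  simp only [sdiff_empty, empty_union, sdiff_self, bot_eq_empty, powerset_empty, union_empty,
    sum_singleton, card_empty, pow_zero, one_mul] at total
  linarith
end

section
/- If the Shapley-type coefficients satisfy β_k = 1/k for k = 1,…,n and are related to coefficients α_k (for single join-irreducible elements, |K| = 1) by β_k = Σ_{l=0}^{n−k} C(n−k, l) · α_{k−1+l}, then α_k = (n−1−k)! · k! / n! for k = 0,…,n−1. -/
/-!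
The system is unitriangular: the equation for `β_{k+1}` involves `α_k` with coefficient `1` and
otherwise only `α_j` with `j > k`, so it has at most one solution, found by descending induction
on `k`. It therefore suffices to check that `α_k = (n-1-k)! k! / n!` solves it. With
`m = n - 1 - k`, the terms satisfy `C(m, l) (m-l)! (k+l)! = m! k! C(k+l, k)`, and the
hockey-stick identity sums these to `m! k! C(m+k+1, k+1) = n! / (k+1)`.
-/

open Nat Finset

theorem eq_of_unitriangular_sum_eq {R : Type*} [Ring R] {N : ℕ} (c : ℕ → ℕ → R)
    (hc : ∀ k, c k 0 = 1) {f g : ℕ → R}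
    (h : ∀ k < N,
      ∑ l ∈ range (N - k), c k l * f (k + l) = ∑ l ∈ range (N - k), c k l * g (k + l)) :
    ∀ k < N, f k = g k := by
  intro k hk
  induction hj : N - k using Nat.strong_induction_on generalizing k with
  | _ j ih =>
    have tail : ∀ l ∈ range (N - k - 1),
        c k (l + 1) * f (k + (l + 1)) = c k (l + 1) * g (k + (l + 1)) := by
      intro l hl
      rw [ih (N - (k + (l + 1))) (by grind) _ (by grind) rfl]
    have hk' := h k hk
    rw [show N - k = N - k - 1 + 1 by omega, sum_range_succ', sum_range_succ', sum_congr rfl tail,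
      hc] at hk'
    simpa using hk'

theorem Nat.choose_mul_factorial_sub_mul_factorial_add {m l : ℕ} (k : ℕ) (hl : l ≤ m) :
    m.choose l * ((m - l)! * (l + k)!) = m ! * k ! * (l + k).choose k := by
  apply Nat.eq_of_mul_eq_mul_right (factorial_pos l)
  calc m.choose l * ((m - l)! * (l + k)!) * l !
      = m.choose l * l ! * (m - l)! * (l + k)! := by ring
    _ = m ! * ((l + k).choose k * l ! * k !) := by
      rw [choose_mul_factorial_mul_factorial hl, add_choose_mul_factorial_mul_factorial]
    _ = m ! * k ! * (l + k).choose k * l ! := by ring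

theorem Nat.sum_choose_mul_factorial_sub_mul_factorial_add (k m : ℕ) :
    (∑ l ∈ range (m + 1), m.choose l * ((m - l)! * (l + k)!)) * (k + 1) = (m + k + 1)! := by
  rw [sum_congr rfl fun l hl => choose_mul_factorial_sub_mul_factorial_add k
    (mem_range_succ_iff.mp hl), ← mul_sum, sum_range_add_choose]
  calc m ! * k ! * (m + k + 1).choose (k + 1) * (k + 1)
      = (m + (k + 1)).choose (k + 1) * m ! * (k + 1)! := by
        rw [factorial_succ, ← add_assoc]; ring
    _ = (m + k + 1)! := by rw [add_choose_mul_factorial_mul_factorial, ← add_assoc]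

noncomputable def shapleyWeight (n k : ℕ) : ℝ := ((n - 1 - k)! * k ! : ℕ) / (n ! : ℝ)

theorem sum_choose_mul_shapleyWeight {n k : ℕ} (hk : k < n) :
    ∑ l ∈ range (n - k), ((n - 1 - k).choose l : ℝ) * shapleyWeight n (k + l) =
      1 / (k + 1) := by
  obtain ⟨m, rfl⟩ : ∃ m, n = m + k + 1 := ⟨n - 1 - k, by omega⟩
  rw [show m + k + 1 - k = m + 1 by omega, show m + k + 1 - 1 - k = m by omega]
  have hterm : ∀ l ∈ range (m + 1), (m.choose l : ℝ) * shapleyWeight (m + k + 1) (k + l)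
      = (m.choose l * ((m - l)! * (l + k)!) : ℕ) / ((m + k + 1)! : ℝ) := by
    intro l hl
    rw [shapleyWeight, show m + k + 1 - 1 - (k + l) = m - l by omega, add_comm k l]
    push_cast
    ring
  rw [sum_congr rfl hterm, ← sum_div, ← Nat.cast_sum,
    div_eq_div_iff (by positivity) (by positivity), one_mul,
    ← sum_choose_mul_factorial_sub_mul_factorial_add k m]
  push_cast
  ring

/-- If the Shapley-type coefficients `β_k = 1/k` (k = 1,…,n) are related to `α_k` by
`β_k = Σ_{l=0}^{n−k} C(n−k, l) · α_{k−1+l}`, then `α_k = (n−1−k)!·k!/n!` for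
`k = 0,…,n−1`. -/
theorem shapley_coefficients (n : ℕ) (hn : 1 ≤ n) (α : ℕ → ℝ)
    (h : ∀ k : ℕ, 1 ≤ k → k ≤ n →
      (1 : ℝ) / (k : ℝ)
        = ∑ l ∈ Finset.range (n - k + 1), ((n - k).choose l : ℝ) * α (k - 1 + l)) :
    ∀ k : ℕ, k ≤ n - 1 → α k = ((n - 1 - k)! * k ! : ℕ) / (n ! : ℝ) := by
  intro k hk
  refine eq_of_unitriangular_sum_eq (N := n) (g := shapleyWeight n)
    (fun j l => ((n - 1 - j).choose l : ℝ)) (by simp) (fun j hj => ?_) k (by omega)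
  have hj' := h (j + 1) (by omega) hj
  rw [show n - (j + 1) + 1 = n - j by omega, show n - (j + 1) = n - 1 - j by omega,
    Nat.add_sub_cancel, Nat.cast_succ] at hj'
  exact hj' ▸ (sum_choose_mul_shapleyWeight hj).symm
end

section
/- Let L be a finite distributive lattice and f : L → ℝ. If m is the Möbius transform of f, then for any join-irreducible i such that x∨i covers x, the interval ↓(x∨i) \ ↓x equals [i, x∨i] = {y : i ≤ y ≤ x∨i}. -/
open scoped Classical

/-! A join-irreducible element of a distributive lattice is join-prime. If `y ≤ x ⊔ i` and
`y ≰ x`, the covering forces `x ⊔ y = x ⊔ i`, so `i ≤ x ⊔ y`, and primality together with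
`i ≰ x` gives `i ≤ y`. -/

theorem CovBy.sup_eq_of_le_of_not_le_s19 {α : Type*} [Lattice α] {a b y : α} (hab : a ⋖ b)
    (hyb : y ≤ b) (hya : ¬ y ≤ a) : a ⊔ y = b :=
  (hab.eq_or_eq le_sup_left (sup_le hab.le hyb)).resolve_left
    fun h => hya (h ▸ le_sup_right)

theorem ideal_diff_eq_interval_general (L : Type*) [DistribLattice L]
    (i x : L) (hi : SupIrred i) (hcov : x ⋖ x ⊔ i) :
    {y : L | y ≤ x ⊔ i} \ {y : L | y ≤ x} = Set.Icc i (x ⊔ i) := by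
  have hix : ¬ i ≤ x := left_lt_sup.1 hcov.lt
  ext y
  constructor
  · rintro ⟨hy, hyx⟩
    have hixy : i ≤ x ⊔ y := (hcov.sup_eq_of_le_of_not_le_s19 hy hyx).ge.trans' le_sup_right
    exact ⟨(hi.supPrime.le_sup.1 hixy).resolve_left hix, hy⟩
  · rintro ⟨hiy, hy⟩
    exact ⟨hy, fun hyx => hix (hiy.trans hyx)⟩

/-- In a finite distributive lattice, if `m` is the Möbius transform of `f` and `i` is
join-irreducible with `x ⊔ i` covering `x`, then `↓(x ⊔ i) \ ↓x = [i, x ⊔ i]`. -/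
theorem ideal_diff_eq_interval (L : Type*) [DistribLattice L] [Fintype L]
    (f m : L → ℝ)
    (hm : ∀ x : L, f x = ∑ y ∈ Finset.univ.filter (fun y => y ≤ x), m y)
    (i x : L) (hi : SupIrred i) (hcov : x ⋖ x ⊔ i) :
    {y : L | y ≤ x ⊔ i} \ {y : L | y ≤ x} = Set.Icc i (x ⊔ i) :=
  ideal_diff_eq_interval_general L i x hi hcov
end
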